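/- Let Φ : I → ℝ be a convex function on an interval I of positive real numbers that is continuously differentiable on the interior of I, let T, V be bounded linear invertible operators on a complex Hilbert space H, and let 0 < m < M with [m², M²] contained in the interior of I and m‖Tx‖ ≤ ‖Vx‖ ≤ M‖Tx‖ for all x ∈ H. Then in the operator order: ⊙_Φ(V,T) ≤ ((M²−m²)⁻¹ ∫_{m²}^{M²} Φ(t) dt)·|T|² + ⊙_{Φ'·ℓ}(V,T) − ((m²+M²)/2)·⊙_{Φ'}(V,T), where ℓ is the identity function, ⊙_{Φ'·ℓ}(V,T) = T* (Φ'(X)·X) T and ⊙_{Φ'}(V,T) = T* Φ'(X) T with X = |VT⁻¹|². -/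

import Mathlib

variable {H : Type*} [NormedAddCommGroup H] [InnerProductSpace ℂ H] [CompleteSpace H]

/-- `X = |VT⁻¹|² = (T*)⁻¹ V* V T⁻¹`. -/
noncomputable def qX (V T : (H →L[ℂ] H)ˣ) : H →L[ℂ] H :=
  star (↑(T⁻¹) : H →L[ℂ] H) * (star (V : H →L[ℂ] H) * (V : H →L[ℂ] H)) * (↑(T⁻¹) : H →L[ℂ] H)

/-- The quadratic operator perspective `⊙_Φ(V,T) = T* Φ(X) T`. -/
noncomputable def qPersp (Φ : ℝ → ℝ) (V T : (H →L[ℂ] H)ˣ) : H →L[ℂ] H :=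
  star (T : H →L[ℂ] H) * cfc Φ (qX V T) * (T : H →L[ℂ] H)

/-- `|T|² = T*T`. -/
noncomputable def modSq (T : (H →L[ℂ] H)ˣ) : H →L[ℂ] H :=
  star (T : H →L[ℂ] H) * (T : H →L[ℂ] H)

/-!
Since `X = |VT⁻¹|²` and the hypothesis says `m ‖y‖ ≤ ‖VT⁻¹ y‖ ≤ M ‖y‖`, the spectrum of `X` lies in
`[m², M²]`. For `t` there, integrating the tangent line of the convex function `Φ` at `t` over
`[m², M²]` gives the scalar inequality `Φ t ≤ (M² - m²)⁻¹ ∫ Φ + Φ' t * t - (m² + M²) / 2 * Φ' t`.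
The continuous functional calculus is monotone and conjugation by `T` preserves the Loewner order,
so the inequality lifts to `T* Φ(X) T`, and the right-hand side splits because the perspective is
linear in the function.
-/

open scoped InnerProductSpace

theorem ConvexOn.add_mul_sub_le_of_hasDerivAt {S : Set ℝ} {f : ℝ → ℝ} {f' x y : ℝ}
    (hf : ConvexOn ℝ S f) (hx : x ∈ S) (hy : y ∈ S) (hfx : HasDerivAt f f' x) :
    f x + f' * (y - x) ≤ f y := by
  rcases lt_trichotomy x y with hxy | rfl | hyx
  · have h := hf.le_slope_of_hasDerivAt hx hy hxy hfx
    rw [slope_def_field, le_div_iff₀ (sub_pos.2 hxy)] at h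
    linarith
  · simp
  · have h := hf.slope_le_of_hasDerivAt hy hx hyx hfx
    rw [slope_def_field, div_le_iff₀ (sub_pos.2 hyx)] at h
    linarith

theorem ConvexOn.le_intervalAverage_add_of_hasDerivAt {S : Set ℝ} {f : ℝ → ℝ} {f' t a b : ℝ}
    (hf : ConvexOn ℝ S f) (ht : t ∈ S) (hfx : HasDerivAt f f' t) (hab : a < b)
    (hS : Set.Icc a b ⊆ S) (hint : IntervalIntegrable f MeasureTheory.volume a b) :
    f t ≤ (b - a)⁻¹ * (∫ s in a..b, f s) + f' * (t - (a + b) / 2) := by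
  have htangent : ∀ s ∈ Set.Icc a b, f t + f' * (s - t) ≤ f s :=
    fun s hs => hf.add_mul_sub_le_of_hasDerivAt ht (hS hs) hfx
  have hline : ∫ s in a..b, (f t + f' * (s - t)) = (b - a) * (f t + f' * ((a + b) / 2 - t)) := by
    simp only [mul_sub, ← add_sub_assoc, add_sub_right_comm (f t)]
    rw [intervalIntegral.integral_add intervalIntegrable_const
        (intervalIntegral.intervalIntegrable_id.const_mul _),
      intervalIntegral.integral_const_mul, integral_id, intervalIntegral.integral_const,
      smul_eq_mul]
    ring
  have hmono : ∫ s in a..b, (f t + f' * (s - t)) ≤ ∫ s in a..b, f s :=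
    intervalIntegral.integral_mono_on hab.le (Continuous.intervalIntegrable (by fun_prop) _ _) hint
      htangent
  rw [hline] at hmono
  rw [inv_mul_eq_div, ← sub_le_iff_le_add, le_div_iff₀ (sub_pos.2 hab)]
  linarith

section LoewnerOrder

variable {E : Type*} [NormedAddCommGroup E] [InnerProductSpace ℂ E]

namespace ContinuousLinearMap

theorem re_inner_algebraMap_apply_self (c : ℝ) (x : E) :
    RCLike.re ⟪algebraMap ℝ (E →L[ℂ] E) c x, x⟫_ℂ = c * ‖x‖ ^ 2 := by
  simp [Algebra.algebraMap_eq_smul_one, ← Complex.ofReal_pow]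

variable [CompleteSpace E]

theorem re_inner_star_mul_self_apply_self (W : E →L[ℂ] E) (x : E) :
    RCLike.re ⟪(star W * W) x, x⟫_ℂ = ‖W x‖ ^ 2 := by
  rw [mul_apply_eq_comp, star_eq_adjoint, adjoint_inner_left, inner_self_eq_norm_sq]

theorem algebraMap_le_of_forall_le_re_inner {A : E →L[ℂ] E} (hA : IsSelfAdjoint A) {c : ℝ}
    (h : ∀ x, c * ‖x‖ ^ 2 ≤ RCLike.re ⟪A x, x⟫_ℂ) : algebraMap ℝ (E →L[ℂ] E) c ≤ A := by
  refine (isPositive_def' (T := A - _)).2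
    ⟨hA.sub (.algebraMap _ (.all c)), fun x => ?_⟩
  rw [reApplyInnerSelf_apply, sub_apply, inner_sub_left, map_sub,
    re_inner_algebraMap_apply_self]
  linarith [h x]

theorem le_algebraMap_of_forall_re_inner_le {A : E →L[ℂ] E} (hA : IsSelfAdjoint A) {c : ℝ}
    (h : ∀ x, RCLike.re ⟪A x, x⟫_ℂ ≤ c * ‖x‖ ^ 2) : A ≤ algebraMap ℝ (E →L[ℂ] E) c := by
  refine (isPositive_def' (T := _ - A)).2
    ⟨(IsSelfAdjoint.algebraMap _ (.all c)).sub hA, fun x => ?_⟩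
  rw [reApplyInnerSelf_apply, sub_apply, inner_sub_left, map_sub,
    re_inner_algebraMap_apply_self]
  linarith [h x]

theorem spectrum_star_mul_self_subset_Icc (W : E →L[ℂ] E) {m M : ℝ} (hm : 0 ≤ m)
    (hW : ∀ x, m * ‖x‖ ≤ ‖W x‖ ∧ ‖W x‖ ≤ M * ‖x‖) :
    spectrum ℝ (star W * W) ⊆ Set.Icc (m ^ 2) (M ^ 2) := by
  have hsa : IsSelfAdjoint (star W * W) := .star_mul_self W
  have hlow : algebraMap ℝ (E →L[ℂ] E) (m ^ 2) ≤ star W * W :=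
    algebraMap_le_of_forall_le_re_inner hsa fun x => by
      rw [re_inner_star_mul_self_apply_self, ← mul_pow]
      exact pow_le_pow_left₀ (by positivity) (hW x).1 2
  have hup : star W * W ≤ algebraMap ℝ (E →L[ℂ] E) (M ^ 2) :=
    le_algebraMap_of_forall_re_inner_le hsa fun x => by
      rw [re_inner_star_mul_self_apply_self, ← mul_pow]
      exact pow_le_pow_left₀ (norm_nonneg _) (hW x).2 2
  exact fun t ht => ⟨(algebraMap_le_iff_le_spectrum hsa).1 hlow t ht,
    (le_algebraMap_iff_spectrum_le hsa).1 hup t ht⟩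

end ContinuousLinearMap

end LoewnerOrder

theorem qX_eq_star_mul_self (V T : (H →L[ℂ] H)ˣ) :
    qX V T = star ((V : H →L[ℂ] H) * ↑T⁻¹) * ((V : H →L[ℂ] H) * ↑T⁻¹) := by
  rw [qX, star_mul, mul_assoc, mul_assoc, mul_assoc]

theorem isSelfAdjoint_qX (V T : (H →L[ℂ] H)ˣ) : IsSelfAdjoint (qX V T) :=
  qX_eq_star_mul_self V T ▸ .star_mul_self _

section QuadraticPerspective

variable {V T : (H →L[ℂ] H)ˣ}

theorem spectrum_qX_subset_Icc {m M : ℝ} (hm : 0 ≤ m)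
    (hTV : ∀ x : H, m * ‖(T : H →L[ℂ] H) x‖ ≤ ‖(V : H →L[ℂ] H) x‖ ∧
      ‖(V : H →L[ℂ] H) x‖ ≤ M * ‖(T : H →L[ℂ] H) x‖) :
    spectrum ℝ (qX V T) ⊆ Set.Icc (m ^ 2) (M ^ 2) := by
  rw [qX_eq_star_mul_self]
  refine ContinuousLinearMap.spectrum_star_mul_self_subset_Icc _ hm fun x => ?_
  have hTTinv : (T : H →L[ℂ] H) ((↑T⁻¹ : H →L[ℂ] H) x) = x := by
    rw [← mul_apply_eq_comp, Units.mul_inv, one_apply_eq_self]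
  simpa only [mul_apply_eq_comp, hTTinv] using hTV ((↑T⁻¹ : H →L[ℂ] H) x)

variable {f g : ℝ → ℝ}

theorem qPersp_mono (h : ∀ t ∈ spectrum ℝ (qX V T), f t ≤ g t)
    (hf : ContinuousOn f (spectrum ℝ (qX V T))) (hg : ContinuousOn g (spectrum ℝ (qX V T))) :
    qPersp f V T ≤ qPersp g V T :=
  star_left_conjugate_le_conjugate (cfc_mono h hf hg) _

theorem qPersp_add (f g : ℝ → ℝ) (hf : ContinuousOn f (spectrum ℝ (qX V T)))
    (hg : ContinuousOn g (spectrum ℝ (qX V T))) :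
    qPersp (fun t => f t + g t) V T = qPersp f V T + qPersp g V T := by
  simp only [qPersp, cfc_add _ f g hf hg, mul_add, add_mul]

theorem qPersp_sub (f g : ℝ → ℝ) (hf : ContinuousOn f (spectrum ℝ (qX V T)))
    (hg : ContinuousOn g (spectrum ℝ (qX V T))) :
    qPersp (fun t => f t - g t) V T = qPersp f V T - qPersp g V T := by
  simp only [qPersp, cfc_sub f g _ hf hg, mul_sub, sub_mul]

theorem qPersp_const_mul (c : ℝ) (f : ℝ → ℝ) (hf : ContinuousOn f (spectrum ℝ (qX V T))) :
    qPersp (fun t => c * f t) V T = c • qPersp f V T := by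
  simp only [qPersp, cfc_const_mul c f _ hf, mul_smul_comm, smul_mul_assoc]

theorem qPersp_const (c : ℝ) : qPersp (fun _ => c) V T = c • modSq T := by
  simp only [qPersp, modSq, cfc_const c _ (isSelfAdjoint_qX V T), Algebra.algebraMap_eq_smul_one,
    mul_smul_comm, smul_mul_assoc, mul_one]

end QuadraticPerspective

theorem stmt11_general (I : Set ℝ)
    (Φ Φ' : ℝ → ℝ) (hΦ : ConvexOn ℝ I Φ)
    (hΦ' : ∀ s ∈ interior I, HasDerivAt Φ (Φ' s) s)
    (hΦ'c : ContinuousOn Φ' (interior I))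
    (T V : (H →L[ℂ] H)ˣ) (m M : ℝ) (hm : 0 < m) (hmM : m < M)
    (hsub : Set.Icc (m ^ 2) (M ^ 2) ⊆ interior I)
    (hTV : ∀ x : H, m * ‖(T : H →L[ℂ] H) x‖ ≤ ‖(V : H →L[ℂ] H) x‖ ∧ ‖(V : H →L[ℂ] H) x‖ ≤ M * ‖(T : H →L[ℂ] H) x‖) :
    qPersp Φ V T ≤
      ((M ^ 2 - m ^ 2)⁻¹ * ∫ t in (m ^ 2 : ℝ)..(M ^ 2), Φ t) • modSq T +
        qPersp (fun s => Φ' s * s) V T -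
        ((m ^ 2 + M ^ 2) / 2) • qPersp Φ' V T := by
  have hab : m ^ 2 < M ^ 2 := pow_lt_pow_left₀ hmM hm.le two_ne_zero
  have hΦc : ContinuousOn Φ (interior I) :=
    fun s hs => (hΦ' s hs).continuousAt.continuousWithinAt
  have hspec : spectrum ℝ (qX V T) ⊆ interior I := (spectrum_qX_subset_Icc hm.le hTV).trans hsub
  set c := (M ^ 2 - m ^ 2)⁻¹ * ∫ t in (m ^ 2 : ℝ)..(M ^ 2), Φ t
  set μ := (m ^ 2 + M ^ 2) / 2
  have hpointwise : ∀ t ∈ spectrum ℝ (qX V T), Φ t ≤ c + (Φ' t * t - μ * Φ' t) := fun t ht =>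
    (hΦ.le_intervalAverage_add_of_hasDerivAt (interior_subset (hspec ht)) (hΦ' t (hspec ht)) hab
      (hsub.trans interior_subset) ((hΦc.mono hsub).intervalIntegrable_of_Icc hab.le)).trans_eq
      (by ring)
  have hΦ'X : ContinuousOn Φ' (spectrum ℝ (qX V T)) := hΦ'c.mono hspec
  have hΦ'idX : ContinuousOn (fun t => Φ' t * t) (spectrum ℝ (qX V T)) :=
    hΦ'X.mul continuousOn_id
  have hμΦ'X : ContinuousOn (fun t => μ * Φ' t) (spectrum ℝ (qX V T)) :=
    continuousOn_const.mul hΦ'X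
  have hrest : ContinuousOn (fun t => Φ' t * t - μ * Φ' t) (spectrum ℝ (qX V T)) :=
    hΦ'idX.sub hμΦ'X
  calc qPersp Φ V T ≤ qPersp (fun t => c + (Φ' t * t - μ * Φ' t)) V T :=
        qPersp_mono hpointwise (hΦc.mono hspec) (continuousOn_const.add hrest)
    _ = c • modSq T + qPersp (fun s => Φ' s * s) V T - μ • qPersp Φ' V T := by
        rw [qPersp_add _ _ continuousOn_const hrest, qPersp_sub _ _ hΦ'idX hμΦ'X, qPersp_const,
          qPersp_const_mul μ Φ' hΦ'X, add_sub_assoc]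

theorem stmt11 (I : Set ℝ) (hIpos : I ⊆ Set.Ioi 0)
    (Φ Φ' : ℝ → ℝ) (hΦ : ConvexOn ℝ I Φ)
    (hΦ' : ∀ s ∈ interior I, HasDerivAt Φ (Φ' s) s)
    (hΦ'c : ContinuousOn Φ' (interior I))
    (T V : (H →L[ℂ] H)ˣ) (m M : ℝ) (hm : 0 < m) (hmM : m < M)
    (hsub : Set.Icc (m ^ 2) (M ^ 2) ⊆ interior I)
    (hTV : ∀ x : H, m * ‖(T : H →L[ℂ] H) x‖ ≤ ‖(V : H →L[ℂ] H) x‖ ∧ ‖(V : H →L[ℂ] H) x‖ ≤ M * ‖(T : H →L[ℂ] H) x‖) :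
    qPersp Φ V T ≤
      ((M ^ 2 - m ^ 2)⁻¹ * ∫ t in (m ^ 2 : ℝ)..(M ^ 2), Φ t) • modSq T +
        qPersp (fun s => Φ' s * s) V T -
        ((m ^ 2 + M ^ 2) / 2) • qPersp Φ' V T :=
  stmt11_general I Φ Φ' hΦ hΦ' hΦ'c T V m M hm hmM hsub hTV
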